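/- Let V, W be finite-dimensional real inner product spaces and a a symmetric positive semi-definite bilinear form on V × W with (v₁,v₂) ↦ a((v₁,0),(v₂,0)) positive definite on V. Suppose there exist constants 0 < c ≤ C such that c‖w‖² ≤ a((S w, w),(S w, w)) and a((0,w),(0,w)) ≤ C‖w‖² for all w ∈ W, where S : W → V is defined by a((S w,0),(v,0)) = −a((0,w),(v,0)) for all v ∈ V. Then the Schur complement form A(w,w) = a((S w,w),(0,w)) satisfies c‖w‖² ≤ A(w,w) ≤ C‖w‖² for all w ∈ W. -/

import Mathlib

/-! The condensed pair `x = (S w, w)` is `a`-orthogonal to `V × 0`, in particular to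
`x - (0, w) = (S w, 0)`. Hence `A(w,w) = a(x, (0,w)) = a(x, x) ≥ c‖w‖²`, and by Pythagoras
`a((0,w),(0,w)) = A(w,w) + a((S w,0),(S w,0)) ≥ A(w,w)`, so `A(w,w) ≤ C‖w‖²`. -/

namespace LinearMap

variable {R M : Type*} [CommRing R] [AddCommGroup M] [Module R M]

theorem apply_self_eq_apply_of_apply_sub_eq_zero (B : M →ₗ[R] M →ₗ[R] R) {x y : M}
    (h : B x (x - y) = 0) : B x x = B x y := by
  rwa [map_sub, sub_eq_zero] at h

theorem apply_self_eq_add_of_sub_apply_eq_zero (B : M →ₗ[R] M →ₗ[R] R) {x y : M}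
    (h : B (x - y) x = 0) : B y y = B x y + B (x - y) (x - y) := by
  simp only [map_sub, sub_apply] at h ⊢
  linear_combination -h

end LinearMap

theorem condensed_apply_inl_eq_zero {R V W : Type*} [CommRing R] [AddCommGroup V] [Module R V]
    [AddCommGroup W] [Module R W] (a : (V × W) →ₗ[R] (V × W) →ₗ[R] R) (S : W → V)
    (hS : ∀ w v, a (S w, 0) (v, 0) = - a ((0 : V), w) (v, 0)) (w : W) (v : V) :
    a (S w, w) (v, 0) = 0 := by
  have hsplit : ((S w, w) : V × W) = (S w, 0) + (0, w) := by simp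
  rw [hsplit, map_add, LinearMap.add_apply, hS, neg_add_cancel]

theorem stmt10_general (V W : Type*)
    [NormedAddCommGroup V] [InnerProductSpace ℝ V]
    [NormedAddCommGroup W] [InnerProductSpace ℝ W]
    (a : (V × W) →ₗ[ℝ] (V × W) →ₗ[ℝ] ℝ)
    (hsymm : ∀ x y, a x y = a y x)
    (hpsd : ∀ x, 0 ≤ a x x)
    (S : W → V)
    (hS : ∀ w v, a (S w, 0) (v, 0) = - a ((0 : V), w) (v, 0))
    (c C : ℝ)
    (hlow : ∀ w : W, c * ‖w‖ ^ 2 ≤ a (S w, w) (S w, w))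
    (hup : ∀ w : W, a ((0 : V), w) ((0 : V), w) ≤ C * ‖w‖ ^ 2) :
    ∀ w : W, c * ‖w‖ ^ 2 ≤ a (S w, w) ((0 : V), w) ∧
      a (S w, w) ((0 : V), w) ≤ C * ‖w‖ ^ 2 := by
  intro w
  have hdiff : ((S w, w) - (0, w) : V × W) = (S w, 0) := by simp
  have horth : a (S w, w) ((S w, w) - (0, w)) = 0 := by
    rw [hdiff]; exact condensed_apply_inl_eq_zero a S hS w (S w)
  have horth' : a ((S w, w) - (0, w)) (S w, w) = 0 := by rw [hsymm, horth]
  have hA := a.apply_self_eq_apply_of_apply_sub_eq_zero horth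
  have hpyth := a.apply_self_eq_add_of_sub_apply_eq_zero horth'
  exact ⟨hA ▸ hlow w, by linarith [hup w, hpsd ((S w, w) - (0, w))]⟩

/-- Two-sided spectral bounds transfer from the full bilinear form to the
statically condensed (Schur complement) form. -/
theorem stmt10 (V W : Type*)
    [NormedAddCommGroup V] [InnerProductSpace ℝ V] [FiniteDimensional ℝ V]
    [NormedAddCommGroup W] [InnerProductSpace ℝ W] [FiniteDimensional ℝ W]
    (a : (V × W) →ₗ[ℝ] (V × W) →ₗ[ℝ] ℝ)
    (hsymm : ∀ x y, a x y = a y x)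
    (hpsd : ∀ x, 0 ≤ a x x)
    (hpd : ∀ v : V, v ≠ 0 → 0 < a (v, 0) (v, 0))
    (S : W → V)
    (hS : ∀ w v, a (S w, 0) (v, 0) = - a ((0 : V), w) (v, 0))
    (c C : ℝ) (hc : 0 < c) (hcC : c ≤ C)
    (hlow : ∀ w : W, c * ‖w‖ ^ 2 ≤ a (S w, w) (S w, w))
    (hup : ∀ w : W, a ((0 : V), w) ((0 : V), w) ≤ C * ‖w‖ ^ 2) :
    ∀ w : W, c * ‖w‖ ^ 2 ≤ a (S w, w) ((0 : V), w) ∧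
      a (S w, w) ((0 : V), w) ≤ C * ‖w‖ ^ 2 :=
  stmt10_general V W a hsymm hpsd S hS c C hlow hup
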